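/- Let σ ⊂ ℚ^n be a full-dimensional strongly convex rational polyhedral cone with at least two facets, I_D its set of facets, and I_B, I_C ⊆ I_D disjoint. Fix p ≥ 0. For m ∈ ℤ^n define Ω(m) ⊆ Λᵖ(ℚ^n) by: Ω(m) = 0 if m ∉ σ or m lies in some facet of I_B; otherwise Ω(m) = Λᵖ( ⋂ { Span(θ) : θ ∈ I_D ∖ I_C, m ∈ θ } ), where the intersection over the empty family is ℚ^n. For each facet θ, let σ_θ = σ + Span(θ) (the closed half-space containing σ with boundary Span(θ)) and define Ω_θ(m) ⊆ Λᵖ(ℚ^n) by: Ω_θ(m) = 0 if m ∉ σ_θ; Ω_θ(m) = Λᵖ(ℚ^n) if m ∈ σ_θ ∖ Span(θ); and for m ∈ Span(θ) ∩ ℤ^n: Ω_θ(m) = 0 if θ ∈ I_B, Ω_θ(m) = Λᵖ(ℚ^n) if θ ∈ I_C, and Ω_θ(m) = Λᵖ(Span(θ)) otherwise. Then for every m ∈ ℤ^n one has Ω(m) = ⋂_{θ ∈ I_D} Ω_θ(m). (This graded identity is the content of the proposition that Danilov's module of logarithmic p-forms Ωᵖ_{(R,!B,*C)} of an affine toric triple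 equals the intersection of its restrictions to the half-space rings R_θ, identifying Ωᵖ_{(X,!B,*C)} with the reflexive hull of Ωᵖ_X(log(B+C))(−B).) -/

import Mathlib

/-!
In degree `m` both sides vanish unless `m ∈ σ` and `m` lies on no facet of `I_B`. Indeed, if
`m ∉ σ` then some facet half-space `σ_θ` misses `m`, because a full-dimensional polyhedral cone
is the intersection of its facet half-spaces: Fourier–Motzkin elimination describes `σ` by
finitely many inequalities, and each inequality of an irredundant description cuts out a facet.
Otherwise every `Ω_θ(m)` is `Λᵖ` of either `Span θ` or the whole space, and the identity says that
`Λᵖ` commutes with intersections of subspaces. For two subspaces `U`, `W` this holds since some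
linear endomorphism fixes `W` pointwise and maps `U` into `U ∩ W`; by the descending chain
condition an arbitrary intersection is a finite one.
-/

namespace ToricPaper

open scoped BigOperators

/-- The ambient space `N_ℚ = ℚ^n`. -/
abbrev V (n : ℕ) := Fin n → ℚ

variable {n : ℕ}

/-- The cone of nonnegative rational combinations of elements of `A`. -/
def coneHull (A : Set (V n)) : Set (V n) :=
  {x | ∃ t : Finset (V n), ↑t ⊆ A ∧ ∃ c : V n → ℚ,
    (∀ v ∈ t, 0 ≤ c v) ∧ x = ∑ v ∈ t, c v • v}

/-- A rational polyhedral cone: the cone generated by finitely many vectors. -/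
def IsPolyCone (σ : Set (V n)) : Prop := ∃ S : Finset (V n), σ = coneHull (S : Set (V n))

/-- A cone is strongly convex if it contains no line. -/
def StronglyConvex (σ : Set (V n)) : Prop := ∀ x ∈ σ, -x ∈ σ → x = 0

/-- `F` is a face of `σ`, cut out by a linear functional nonnegative on `σ`. -/
def IsFaceOf (F σ : Set (V n)) : Prop :=
  ∃ m : (V n) →ₗ[ℚ] ℚ, (∀ x ∈ σ, 0 ≤ m x) ∧ F = {x ∈ σ | m x = 0}

/-- Dimension of a cone: the rank of its linear span. -/
noncomputable def coneDim (σ : Set (V n)) : ℕ := Module.finrank ℚ (Submodule.span ℚ σ)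

/-- A ray of a cone is a one-dimensional face. -/
def IsRayOf (ν σ : Set (V n)) : Prop := IsFaceOf ν σ ∧ coneDim ν = 1

/-- An abstract ray: a one-dimensional strongly convex rational polyhedral cone. -/
def IsRay (ν : Set (V n)) : Prop := IsPolyCone ν ∧ StronglyConvex ν ∧ coneDim ν = 1

/-- All faces of a cone `τ` (the affine fan induced by `τ`). -/
def faces (τ : Set (V n)) : Set (Set (V n)) := {F | IsFaceOf F τ}

/-- The rays of a cone `τ`. -/
def raysOf (τ : Set (V n)) : Set (Set (V n)) := {ν | IsRayOf ν τ}

/-- A fan: a finite collection of strongly convex rational polyhedral cones, closed under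
taking faces, such that the intersection of two cones is a face of each. -/
def IsFan (X : Set (Set (V n))) : Prop :=
  X.Finite ∧ (∀ σ ∈ X, IsPolyCone σ ∧ StronglyConvex σ) ∧
  (∀ σ ∈ X, ∀ F, IsFaceOf F σ → F ∈ X) ∧
  (∀ σ ∈ X, ∀ σ' ∈ X, IsFaceOf (σ ∩ σ') σ ∧ IsFaceOf (σ ∩ σ') σ')

/-- The rays (one-dimensional cones) belonging to a collection of cones. -/
def raysIn (X : Set (Set (V n))) : Set (Set (V n)) := {ν | ν ∈ X ∧ coneDim ν = 1}

/-- The support of a collection of cones. -/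
def support (X : Set (Set (V n))) : Set (V n) := ⋃₀ X

/-- The data of a fan quadruple `(X, !B, *C, !*H)`: three pairwise disjoint sets of rays. -/
def IsQuadData (X B C H : Set (Set (V n))) : Prop :=
  B ⊆ raysIn X ∧ C ⊆ raysIn X ∧ H ⊆ raysIn X ∧ Disjoint B C ∧ Disjoint B H ∧ Disjoint C H

/-- The data of a fan triple `(X, !B, *C)`: two disjoint sets of rays. -/
def IsTripleData (X B C : Set (Set (V n))) : Prop :=
  B ⊆ raysIn X ∧ C ⊆ raysIn X ∧ Disjoint B C

/-- `ρ` is a sorting function for the (restricted) quadruple on the faces of `ξ`: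
nonnegative on rays of `ξ` in `B`, nonpositive on rays of `ξ` in `C`, zero on rays of `ξ`
in none of `B`, `C`, `H`. -/
def IsSortingOn (ξ : Set (V n)) (B C H : Set (Set (V n))) (ρ : (V n) →ₗ[ℚ] ℚ) : Prop :=
  (∀ ν, IsRayOf ν ξ → ν ∈ B → ∀ x ∈ ν, 0 ≤ ρ x) ∧
  (∀ ν, IsRayOf ν ξ → ν ∈ C → ∀ x ∈ ν, ρ x ≤ 0) ∧
  (∀ ν, IsRayOf ν ξ → ν ∉ B → ν ∉ C → ν ∉ H → ∀ x ∈ ν, ρ x = 0)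

/-- The (restricted) affine quadruple on the faces of `ξ` admits a `Cf`-strict sorting
function: a sorting function which is moreover negative on `ν ∖ {0}` for every `ν ∈ Cf`. -/
def HasStrictSortingOn (ξ : Set (V n)) (B C H Cf : Set (Set (V n))) : Prop :=
  ∃ ρ : (V n) →ₗ[ℚ] ℚ, IsSortingOn ξ B C H ρ ∧
    ∀ ν, IsRayOf ν ξ → ν ∈ Cf → ∀ x ∈ ν, x ≠ 0 → ρ x < 0

/-- A cone `ξ` is `E`-unsettled if no ray of `ξ` lies in `E`. -/
def Unsettled (E : Set (Set (V n))) (ξ : Set (V n)) : Prop := ∀ ν, IsRayOf ν ξ → ν ∉ E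

/-- The quadruple `(X, !B, *C, !*H)` is `(Bs, Cf, Hs)`-sorted. -/
def SortedOn (X B C H Bs Cf Hs : Set (Set (V n))) : Prop :=
  ∀ ξ ∈ X, Unsettled ((B \ Bs) ∪ (H \ Hs)) ξ → HasStrictSortingOn ξ B C H Cf

/-- Partially-sorted: `(∅, C, ∅)`-sorted. -/
def PartiallySortedOn (X B C H : Set (Set (V n))) : Prop := SortedOn X B C H ∅ C ∅

/-- Well-sorted: `(B, C, H)`-sorted. -/
def WellSortedOn (X B C H : Set (Set (V n))) : Prop := SortedOn X B C H B C H

/-- A simplicial cone is generated by linearly independent vectors. -/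
def IsSimplicialCone (σ : Set (V n)) : Prop :=
  ∃ S : Finset (V n), LinearIndependent ℚ (fun v : S => (v : V n)) ∧
    σ = coneHull (S : Set (V n))

/-- A collection of cones is `E`-simplicial: every cone having a ray of `E` as a face is the
join of that ray with a cone of the collection of one less dimension. -/
def ESimplicialOn (X E : Set (Set (V n))) : Prop :=
  ∀ ν ∈ E, ∀ σ ∈ X, IsFaceOf ν σ →
    ∃ ζ ∈ X, σ = coneHull (ζ ∪ ν) ∧ coneDim σ = coneDim ζ + 1

/-- A subdivision of a fan: a fan with the same support, every cone of which is contained in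
a cone of the base. -/
def IsSubdivision (X' X : Set (Set (V n))) : Prop :=
  IsFan X' ∧ support X' = support X ∧ ∀ σ' ∈ X', ∃ σ ∈ X, σ' ⊆ σ

/-- A subdivision is efficient if it introduces no new rays. -/
def IsEfficient (X' X : Set (Set (V n))) : Prop := raysIn X' = raysIn X

/-- `ψ` is a good (convex piecewise-linear) function for the subdivision `X'` relative to the
cones of the base fan `X`: on each cone `τ` of `X`, `ψ` is convex, linear on each cone of
`X'` contained in `τ`, and the maximal subcones of linearity of `ψ` inside `τ` are exactly
the cones of `X'` (i.e. any convex subset of `τ` on which `ψ` is linear lies in one of them). -/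
def IsGoodFor (X X' : Set (Set (V n))) (ψ : V n → ℚ) : Prop :=
  ∀ τ ∈ X, ConvexOn ℚ τ ψ ∧
    (∀ σ' ∈ X', σ' ⊆ τ → ∃ m : (V n) →ₗ[ℚ] ℚ, ∀ x ∈ σ', ψ x = m x) ∧
    (∀ (m : (V n) →ₗ[ℚ] ℚ) (t : Set (V n)), t ⊆ τ → Convex ℚ t →
      (∀ x ∈ t, ψ x = m x) → ∃ σ' ∈ X', σ' ⊆ τ ∧ t ⊆ σ')

/-- Sign conditions of a good sorting function with respect to the quadruple data on `X'`. -/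
def SignedOn (X' B' C' H' : Set (Set (V n))) (ψ : V n → ℚ) : Prop :=
  (∀ ν ∈ B', ∀ x ∈ ν, 0 ≤ ψ x) ∧ (∀ ν ∈ C', ∀ x ∈ ν, ψ x ≤ 0) ∧
  (∀ ν ∈ raysIn X', ν ∉ B' → ν ∉ C' → ν ∉ H' → ∀ x ∈ ν, ψ x = 0)

/-- Sign conditions restricted to the rays contained in a cone `τ`. -/
def SignedOnIn (τ : Set (V n)) (X' B' C' H' : Set (Set (V n))) (ψ : V n → ℚ) : Prop :=
  (∀ ν ∈ B', ν ⊆ τ → ∀ x ∈ ν, 0 ≤ ψ x) ∧ (∀ ν ∈ C', ν ⊆ τ → ∀ x ∈ ν, ψ x ≤ 0) ∧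
  (∀ ν ∈ raysIn X', ν ⊆ τ → ν ∉ B' → ν ∉ C' → ν ∉ H' → ∀ x ∈ ν, ψ x = 0)

/-- A convex subdivision, with respect to a fan quadruple structure on `X'`. -/
def IsConvexSubdiv (X' X B' C' H' : Set (Set (V n))) : Prop :=
  IsSubdivision X' X ∧ ∃ ψ : V n → ℚ, IsGoodFor X X' ψ ∧ SignedOn X' B' C' H' ψ

/-- A locally-convex subdivision: for each cone of the base there is a good sorting function
on that cone. -/
def IsLocallyConvexSubdiv (X' X B' C' H' : Set (Set (V n))) : Prop :=
  IsSubdivision X' X ∧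
    ∀ τ ∈ X, ∃ ψ : V n → ℚ, IsGoodFor {τ} X' ψ ∧ SignedOnIn τ X' B' C' H' ψ

/-- Star subdivision of `X` at a ray `ν` contained in the support of `X`. -/
def starSubdiv (X : Set (Set (V n))) (ν : Set (V n)) : Set (Set (V n)) :=
  {σ | σ ∈ X ∧ ¬ ν ⊆ σ} ∪
  {τ | ∃ σ ∈ X, ν ⊆ σ ∧ ∃ ξ, IsFaceOf ξ σ ∧ ¬ ν ⊆ ξ ∧ τ = coneHull (ξ ∪ ν)}

/-- The set `S` of facets used in the extension construction `Ext(𝔗, ν)`. -/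
noncomputable def extS (τ ν : Set (V n)) : Set (Set (V n)) :=
  if coneDim (coneHull (τ ∪ ν)) = coneDim τ + 1 then {τ}
  else {ζ | (IsFaceOf ζ τ ∧ coneDim ζ + 1 = coneDim τ) ∧
    ∃ m : (V n) →ₗ[ℚ] ℚ, (∀ x ∈ ζ, m x = 0) ∧ (∃ v ∈ ν, v ≠ 0 ∧ m v = -1) ∧
      ∀ x ∈ τ, x ∉ ζ → 0 < m x}

/-- All faces of cones of `extS τ ν`. -/
noncomputable def extFaces (τ ν : Set (V n)) : Set (Set (V n)) :=
  {ξ | ∃ ζ ∈ extS τ ν, IsFaceOf ξ ζ}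

/-- The extension `Ext(𝔗, ν)` of the affine fan of `τ` by the ray `ν`. -/
noncomputable def Ext (τ ν : Set (V n)) : Set (Set (V n)) :=
  {ν} ∪ faces τ ∪ (fun ξ => coneHull (ξ ∪ ν)) '' extFaces τ ν

/-- The extension `Ext(𝔗', ν)` of a subdivision `𝒯'` of the affine fan of `τ` by the ray
`ν`. -/
noncomputable def ExtSub (T' : Set (Set (V n))) (τ ν : Set (V n)) : Set (Set (V n)) :=
  {ν} ∪ T' ∪ (fun ξ => coneHull (ξ ∪ ν)) ''
    {ξ | ∃ ζ' ∈ T', (∃ ζ ∈ extS τ ν, ζ' ⊆ ζ) ∧ IsFaceOf ξ ζ'}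

/-- Sequential convexity of a sequence of star subdivisions (the list gives the rays in the
order in which the star subdivisions are performed). -/
def SeqConvex (B C H : Set (Set (V n))) : Set (Set (V n)) → List (Set (V n)) → Prop
  | _, [] => True
  | X, ν :: rest =>
      IsLocallyConvexSubdiv (starSubdiv X ν) X B C H ∧
      SeqConvex B C H (starSubdiv X ν) rest

/-- The facets (codimension-one faces) of a cone. -/
def facetsOf (σ : Set (V n)) : Set (Set (V n)) :=
  {θ | IsFaceOf θ σ ∧ coneDim θ + 1 = coneDim σ}

/-- The `p`-th exterior power of a subspace `W ⊆ ℚ^n`, as a subspace of `Λᵖ(ℚ^n)` inside the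
exterior algebra. -/
noncomputable def extPow (p : ℕ) (W : Submodule ℚ (V n)) :
    Submodule ℚ (ExteriorAlgebra ℚ (V n)) :=
  (Submodule.map (ExteriorAlgebra.ι ℚ) W) ^ p

/-- The closed half-space `σ_θ = σ + Span(θ)` determined by a facet `θ` of `σ`. -/
def halfSpaceOf (σ θ : Set (V n)) : Set (V n) :=
  {x | ∃ s ∈ σ, ∃ w ∈ (Submodule.span ℚ θ : Set (V n)), x = s + w}

open Classical in
/-- The degree-`m` component `Ω(m)` of Danilov's module of logarithmic `p`-forms. -/
noncomputable def bigOmega (σ : Set (V n)) (IB IC : Set (Set (V n))) (p : ℕ) (x : V n) :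
    Submodule ℚ (ExteriorAlgebra ℚ (V n)) :=
  if x ∉ σ ∨ ∃ θ ∈ IB, x ∈ θ then ⊥
  else extPow p (⨅ θ ∈ {θ | θ ∈ facetsOf σ \ IC ∧ x ∈ θ}, Submodule.span ℚ θ)

open Classical in
/-- The degree-`m` component `Ω_θ(m)` of the module of logarithmic `p`-forms on the
half-space ring `R_θ`. -/
noncomputable def omegaTheta (σ θ : Set (V n)) (IB IC : Set (Set (V n))) (p : ℕ) (x : V n) :
    Submodule ℚ (ExteriorAlgebra ℚ (V n)) :=
  if x ∉ halfSpaceOf σ θ then ⊥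
  else if x ∉ (Submodule.span ℚ θ : Set (V n)) then extPow p ⊤
  else if θ ∈ IB then ⊥
  else if θ ∈ IC then extPow p ⊤
  else extPow p (Submodule.span ℚ θ)

section Inequalities

open PointedCone

variable {𝕜 M : Type*} [Field 𝕜] [LinearOrder 𝕜] [IsStrictOrderedRing 𝕜]
  [AddCommGroup M] [Module 𝕜 M]

theorem mem_dual_id_finset {D : Finset (Module.Dual 𝕜 M)} {x : M} :
    x ∈ dual .id (D : Set (Module.Dual 𝕜 M)) ↔ ∀ f ∈ D, 0 ≤ f x := by
  simp

open Classical in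
noncomputable def fourierMotzkin (D : Finset (Module.Dual 𝕜 M)) (a : M) :
    Finset (Module.Dual 𝕜 M) :=
  D.filter (fun f => 0 ≤ f a) ∪
    ((D.filter (fun f => f a < 0)) ×ˢ (D.filter (fun g => 0 < g a))).image
      (fun fg => fg.2 a • fg.1 - fg.1 a • fg.2)

theorem mem_dual_fourierMotzkin {D : Finset (Module.Dual 𝕜 M)} {a x : M} :
    x ∈ dual .id (fourierMotzkin D a : Set (Module.Dual 𝕜 M)) ↔
      ∃ t : 𝕜, 0 ≤ t ∧ x - t • a ∈ dual .id (D : Set (Module.Dual 𝕜 M)) := by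
  classical
  simp only [mem_dual_id_finset, fourierMotzkin, Finset.mem_union, Finset.mem_filter,
    Finset.mem_image, Finset.mem_product, map_sub, map_smul, smul_eq_mul]
  constructor
  · intro hx
    have hpair : ∀ f ∈ D, ∀ g ∈ D, f a < 0 → 0 < g a → f a * g x ≤ g a * f x := by
      intro f hf g hg hfa hga
      have := hx _ (.inr ⟨(f, g), ⟨⟨hf, hfa⟩, hg, hga⟩, rfl⟩)
      simpa [sub_nonneg] using this
    -- `t` is the largest of the lower bounds `0` and `f x / f a` (`f a < 0`) that `D` imposes
    set L := insert 0 ((D.filter (fun f => f a < 0)).image (fun f => f x / f a))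
    have hL : L.Nonempty := Finset.insert_nonempty _ _
    have hle : ∀ g ∈ D, 0 < g a → ∀ l ∈ L, l * g a ≤ g x := by
      intro g hg hga l hl
      rcases Finset.mem_insert.1 hl with rfl | hl
      · simpa using hx g (.inl ⟨hg, hga.le⟩)
      · obtain ⟨f, hf, rfl⟩ := Finset.mem_image.1 hl
        obtain ⟨hf, hfa⟩ := Finset.mem_filter.1 hf
        rw [div_mul_eq_mul_div, div_le_iff_of_neg hfa]
        linarith [hpair f hf g hg hfa hga]
    refine ⟨L.max' hL, L.le_max' 0 (Finset.mem_insert_self _ _), fun f hf => ?_⟩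
    rcases lt_trichotomy (f a) 0 with hfa | hfa | hfa
    · have := L.le_max' (f x / f a)
        (Finset.mem_insert_of_mem (Finset.mem_image_of_mem _ (Finset.mem_filter.2 ⟨hf, hfa⟩)))
      rw [div_le_iff_of_neg hfa] at this
      linarith
    · simpa [hfa] using hx f (.inl ⟨hf, hfa.ge⟩)
    · linarith [hle f hf hfa _ (L.max'_mem hL)]
  · rintro ⟨t, ht, hx⟩ h (⟨hf, hfa⟩ | ⟨⟨f, g⟩, ⟨⟨hf, hfa⟩, hg, hga⟩, rfl⟩)
    · nlinarith [hx h hf]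
    · simp only [LinearMap.sub_apply, LinearMap.smul_apply, smul_eq_mul]
      nlinarith [hx f hf, hx g hg]

theorem exists_pos_forall_pos_add_mul {ι : Type*} (s : Finset ι) {b : ι → 𝕜} (c : ι → 𝕜)
    (hb : ∀ i ∈ s, 0 < b i) : ∃ ε : 𝕜, 0 < ε ∧ ∀ i ∈ s, 0 < b i + ε * c i := by
  induction s using Finset.cons_induction with
  | empty => exact ⟨1, one_pos, by simp⟩
  | cons j s hj ih =>
    obtain ⟨ε, hε, hs⟩ := ih fun i hi => hb i (Finset.mem_cons_of_mem hi)
    have hbj := hb j (Finset.mem_cons_self j s)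
    have hd : 0 < |c j| + 1 := by positivity
    refine ⟨min ε (b j / (|c j| + 1)), lt_min hε (div_pos hbj hd), ?_⟩
    have hδε := min_le_left ε (b j / (|c j| + 1))
    have hδj := (le_div_iff₀ hd).1 (min_le_right ε (b j / (|c j| + 1)))
    have hδ := lt_min hε (div_pos hbj hd)
    intro i hi
    rcases Finset.mem_cons.1 hi with rfl | hi
    · nlinarith [neg_abs_le (c i)]
    · nlinarith [hs i hi, hb i (Finset.mem_cons_of_mem hi)]

theorem pos_apply_of_forall_exists_add_smul_mem {σ : Set M} {y : M}
    (hy : ∀ z, ∃ ε : 𝕜, 0 < ε ∧ y + ε • z ∈ σ) {f : Module.Dual 𝕜 M} (hf0 : f ≠ 0)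
    (hf : ∀ x ∈ σ, 0 ≤ f x) : 0 < f y := by
  obtain ⟨v, hv⟩ : ∃ v, f v ≠ 0 := by simpa [DFunLike.ne_iff] using hf0
  obtain ⟨ε, hε, hmem⟩ := hy (-(f v)⁻¹ • v)
  have := hf _ hmem
  simp only [map_add, map_smul, smul_eq_mul, neg_mul, inv_mul_cancel₀ hv] at this
  linarith

theorem exists_irredundant_subset (D : Finset (Module.Dual 𝕜 M)) :
    ∃ E ⊆ D, dual .id (E : Set (Module.Dual 𝕜 M)) = dual .id (D : Set (Module.Dual 𝕜 M)) ∧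
      ∀ f ∈ E, ∃ w, (∀ g ∈ E, g ≠ f → 0 ≤ g w) ∧ f w < 0 := by
  classical
  obtain ⟨E, ⟨hED, hE⟩, hmin⟩ := wellFounded_lt.has_min
    {E : Finset (Module.Dual 𝕜 M) | E ⊆ D ∧
      dual .id (E : Set (Module.Dual 𝕜 M)) = dual .id (D : Set (Module.Dual 𝕜 M))}
    ⟨D, subset_rfl, rfl⟩
  refine ⟨E, hED, hE, fun f hf => ?_⟩
  by_contra! hred
  refine hmin (E.erase f) ⟨(E.erase_subset f).trans hED, le_antisymm ?_ ?_⟩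
    (Finset.erase_ssubset hf)
  · intro w hw
    rw [← hE, mem_dual_id_finset]
    rw [mem_dual_id_finset] at hw
    intro g hg
    by_cases hgf : g = f
    · exact hgf ▸ hred w fun g hg hgf => hw g (Finset.mem_erase.2 ⟨hgf, hg⟩)
    · exact hw g (Finset.mem_erase.2 ⟨hgf, hg⟩)
  · rw [← hE]
    exact dual_anti (Finset.coe_subset.2 (E.erase_subset f))

theorem exists_apply_eq_zero_forall_pos {E : Finset (Module.Dual 𝕜 M)} {y w : M}
    (hy : ∀ g ∈ E, 0 < g y) {f : Module.Dual 𝕜 M} (hf : f ∈ E)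
    (hw : ∀ g ∈ E, g ≠ f → 0 ≤ g w) (hfw : f w < 0) :
    ∃ z, f z = 0 ∧ ∀ g ∈ E, g ≠ f → 0 < g z := by
  refine ⟨(-f w) • y + f y • w, by simp; ring, fun g hg hgf => ?_⟩
  simp only [map_add, map_smul, smul_eq_mul]
  nlinarith [hy f hf, hy g hg, hw g hg hgf]

theorem ker_le_span_face {E : Finset (Module.Dual 𝕜 M)} {f : Module.Dual 𝕜 M}
    {z : M} (hfz : f z = 0) (hz : ∀ g ∈ E, g ≠ f → 0 < g z) :
    LinearMap.ker f ≤
      Submodule.span 𝕜 {x ∈ dual .id (E : Set (Module.Dual 𝕜 M)) | f x = 0} := by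
  classical
  intro u hu
  rw [LinearMap.mem_ker] at hu
  obtain ⟨ε, hε, hεz⟩ := exists_pos_forall_pos_add_mul (E.erase f) (fun g => g u)
    fun g hg => hz g (Finset.mem_of_mem_erase hg) (Finset.ne_of_mem_erase hg)
  have hmem : ∀ t : 𝕜, (∀ g ∈ E, g ≠ f → 0 ≤ g z + t * g u) →
      z + t • u ∈ {x ∈ dual .id (E : Set (Module.Dual 𝕜 M)) | f x = 0} := by
    intro t ht
    refine ⟨mem_dual_id_finset.2 fun g hg => ?_, by simp [hfz, hu]⟩
    by_cases hgf : g = f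
    · simp [hgf, hfz, hu]
    · simpa using ht g hg hgf
  have h0 := Submodule.subset_span (R := 𝕜)
    (hmem 0 fun g hg hgf => by simpa using (hz g hg hgf).le)
  have hε' := Submodule.subset_span (R := 𝕜)
    (hmem ε fun g hg hgf => (hεz g (Finset.mem_erase.2 ⟨hgf, hg⟩)).le)
  have := Submodule.smul_mem _ ε⁻¹ (Submodule.sub_mem _ hε' h0)
  rwa [zero_smul, add_zero, add_sub_cancel_left, inv_smul_smul₀ hε.ne'] at this

end Inequalities

section Polyhedral

open PointedCone

theorem mem_coneHull_finset {S : Finset (V n)} {x : V n} :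
    x ∈ coneHull (S : Set (V n)) ↔ ∃ c : V n → ℚ, (∀ v ∈ S, 0 ≤ c v) ∧ x = ∑ v ∈ S, c v • v := by
  classical
  constructor
  · rintro ⟨t, hts, c, hc, rfl⟩
    refine ⟨fun v => if v ∈ t then c v else 0, fun v _ => ?_, ?_⟩
    · dsimp only
      split_ifs with hv
      exacts [hc v hv, le_rfl]
    · rw [← Finset.sum_subset (Finset.coe_subset.1 hts) fun v _ hv => by simp [hv]]
      exact Finset.sum_congr rfl fun v hv => by simp [hv]
  · rintro ⟨c, hc, rfl⟩
    exact ⟨S, subset_rfl, c, hc, rfl⟩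

theorem mem_coneHull_insert {S : Finset (V n)} {a : V n} (ha : a ∉ S) {x : V n} :
    x ∈ coneHull (↑(insert a S) : Set (V n)) ↔
      ∃ t : ℚ, 0 ≤ t ∧ x - t • a ∈ coneHull (S : Set (V n)) := by
  classical
  simp only [mem_coneHull_finset, Finset.sum_insert ha, Finset.forall_mem_insert]
  constructor
  · rintro ⟨c, ⟨hca, hc⟩, rfl⟩
    exact ⟨c a, hca, c, hc, by abel⟩
  · rintro ⟨t, ht, c, hc, hx⟩
    refine ⟨Function.update c a t, ⟨by simpa using ht, fun v hv => ?_⟩, ?_⟩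
    · rw [Function.update_of_ne (ne_of_mem_of_not_mem hv ha)]
      exact hc v hv
    · rw [Function.update_self, Finset.sum_congr rfl fun v hv => by
        rw [Function.update_of_ne (ne_of_mem_of_not_mem hv ha)], ← hx]
      abel

theorem coneHull_empty : coneHull (∅ : Set (V n)) = {0} := by
  ext x
  simpa using mem_coneHull_finset (S := ∅) (x := x)

/-- The easy half of Minkowski–Weyl. -/
theorem exists_finset_coneHull_eq_dual (S : Finset (V n)) :
    ∃ D : Finset (Module.Dual ℚ (V n)),
      coneHull (S : Set (V n)) = dual .id (D : Set (Module.Dual ℚ (V n))) := by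
  classical
  induction S using Finset.induction_on with
  | empty =>
    refine ⟨Finset.univ.image (fun i => LinearMap.proj i) ∪
      Finset.univ.image (fun i => -LinearMap.proj i), ?_⟩
    ext x
    simp only [Finset.coe_empty, coneHull_empty, Set.mem_singleton_iff, SetLike.mem_coe,
      mem_dual_id_finset, Finset.mem_union, Finset.mem_image, Finset.mem_univ, true_and]
    constructor
    · rintro rfl f (⟨i, rfl⟩ | ⟨i, rfl⟩) <;> simp
    · intro hx
      funext i
      exact le_antisymm (by simpa using hx _ (.inr ⟨i, rfl⟩)) (by simpa using hx _ (.inl ⟨i, rfl⟩))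
  | insert a S ha ih =>
    obtain ⟨D, hD⟩ := ih
    refine ⟨fourierMotzkin D a, Set.ext fun x => ?_⟩
    rw [mem_coneHull_insert ha, hD, SetLike.mem_coe, mem_dual_fourierMotzkin]
    rfl

theorem span_coneHull (A : Set (V n)) :
    Submodule.span ℚ (coneHull A) = Submodule.span ℚ A := by
  refine le_antisymm (Submodule.span_le.2 ?_) (Submodule.span_mono fun v hv => ?_)
  · rintro _ ⟨t, hts, c, -, rfl⟩
    exact Submodule.sum_mem _ fun v hv => Submodule.smul_mem _ _ (Submodule.subset_span (hts hv))
  · classical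
    exact ⟨{v}, by simpa using hv, fun _ => 1, by simp, by simp⟩

theorem exists_forall_exists_add_smul_mem_coneHull {S : Finset (V n)}
    (hS : Submodule.span ℚ (S : Set (V n)) = ⊤) :
    ∃ y ∈ coneHull (S : Set (V n)), ∀ z, ∃ ε : ℚ, 0 < ε ∧ y + ε • z ∈ coneHull (S : Set (V n)) := by
  refine ⟨∑ v ∈ S, v, mem_coneHull_finset.2 ⟨fun _ => 1, by simp, by simp⟩, fun z => ?_⟩
  obtain ⟨a, -, ha⟩ := Submodule.mem_span_finset.1 (hS ▸ Submodule.mem_top : z ∈ _)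
  obtain ⟨ε, hε, hpos⟩ := exists_pos_forall_pos_add_mul S a fun _ _ => one_pos
  refine ⟨ε, hε, mem_coneHull_finset.2 ⟨fun v => 1 + ε * a v, fun v hv => (hpos v hv).le, ?_⟩⟩
  simp only [add_smul, one_smul, mul_smul, Finset.sum_add_distrib, ← Finset.smul_sum, ha]

end Polyhedral

section Facets

open PointedCone

theorem span_face_le_ker (σ : Set (V n)) (f : Module.Dual ℚ (V n)) :
    Submodule.span ℚ {x ∈ σ | f x = 0} ≤ LinearMap.ker f :=
  Submodule.span_le.2 fun _ hx => hx.2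

theorem IsFaceOf.mem_of_mem_span {θ σ : Set (V n)} (hθ : IsFaceOf θ σ) {x : V n}
    (hxσ : x ∈ σ) (hx : x ∈ Submodule.span ℚ θ) : x ∈ θ := by
  obtain ⟨f, -, rfl⟩ := hθ
  exact ⟨hxσ, span_face_le_ker σ f hx⟩

theorem mem_facetsOf_of_ker_le_span {σ : Set (V n)} (hfull : Submodule.span ℚ σ = ⊤)
    {f : Module.Dual ℚ (V n)} (hf0 : f ≠ 0) (hf : ∀ x ∈ σ, 0 ≤ f x)
    (hker : LinearMap.ker f ≤ Submodule.span ℚ {x ∈ σ | f x = 0}) :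
    {x ∈ σ | f x = 0} ∈ facetsOf σ := by
  refine ⟨⟨f, hf, rfl⟩, ?_⟩
  rw [coneDim, coneDim, hfull, le_antisymm (span_face_le_ker σ f) hker, finrank_top]
  exact Module.Dual.finrank_ker_add_one_of_ne_zero hf0

theorem notMem_halfSpaceOf_face {σ : Set (V n)} {f : Module.Dual ℚ (V n)}
    (hf : ∀ x ∈ σ, 0 ≤ f x) {x : V n} (hx : f x < 0) :
    x ∉ halfSpaceOf σ {x ∈ σ | f x = 0} := by
  rintro ⟨s, hs, w, hw, rfl⟩
  have hfw : f w = 0 := span_face_le_ker σ f hw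
  rw [map_add, hfw, add_zero] at hx
  exact (hf s hs).not_gt hx

/-- The facet comes from an irredundant inequality violated by `x`: it contains a point where all
the other inequalities are strict, so it spans the whole hyperplane. -/
theorem exists_facet_notMem_halfSpaceOf {σ : Set (V n)} (hσ : IsPolyCone σ)
    (hfull : Submodule.span ℚ σ = ⊤) {x : V n} (hx : x ∉ σ) :
    ∃ θ ∈ facetsOf σ, x ∉ halfSpaceOf σ θ := by
  obtain ⟨S, rfl⟩ := hσ
  obtain ⟨y, -, hy⟩ := exists_forall_exists_add_smul_mem_coneHull (span_coneHull _ ▸ hfull)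
  obtain ⟨D, hD⟩ := exists_finset_coneHull_eq_dual S
  obtain ⟨E, -, hE, hirr⟩ := exists_irredundant_subset D
  rw [hD, ← hE] at hx hy hfull ⊢
  have hEσ : ∀ g ∈ E, ∀ v ∈ dual .id (E : Set (Module.Dual ℚ (V n))), 0 ≤ g v :=
    fun g hg v hv => mem_dual_id_finset.1 hv g hg
  have hE0 : ∀ g ∈ E, g ≠ 0 := by
    rintro g hg rfl
    obtain ⟨w, -, hw⟩ := hirr 0 hg
    exact hw.false
  obtain ⟨f, hf, hfx⟩ : ∃ f ∈ E, f x < 0 := by simpa [mem_dual_id_finset] using hx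
  obtain ⟨w, hw, hfw⟩ := hirr f hf
  obtain ⟨z, hfz, hz⟩ := exists_apply_eq_zero_forall_pos
    (fun g hg => pos_apply_of_forall_exists_add_smul_mem hy (hE0 g hg) (hEσ g hg)) hf hw hfw
  exact ⟨_, mem_facetsOf_of_ker_le_span hfull (hE0 f hf) (hEσ f hf) (ker_le_span_face hfz hz),
    notMem_halfSpaceOf_face (hEσ f hf) hfx⟩

end Facets

theorem exists_linearMap_eqOn_map_le_inf {K E : Type*} [DivisionRing K] [AddCommGroup E]
    [Module K E] (U W : Submodule K E) :
    ∃ q : E →ₗ[K] E, (∀ w ∈ W, q w = w) ∧ U.map q ≤ U ⊓ W := by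
  -- `q = id - s ∘ π` with `π : E → E ⧸ W` and `s` a section of `π` over `π(U)`, valued in `U`
  set π₀ := (W.mkQ ∘ₗ U.subtype).rangeRestrict
  obtain ⟨s₀, hs₀⟩ := π₀.exists_rightInverse_of_surjective (LinearMap.range_rangeRestrict _)
  obtain ⟨s, hs⟩ := LinearMap.exists_extend s₀
  refine ⟨LinearMap.id - U.subtype ∘ₗ s ∘ₗ W.mkQ, fun w hw => ?_, ?_⟩
  · simp [(Submodule.Quotient.mk_eq_zero W).2 hw]
  rintro _ ⟨u, hu, rfl⟩
  have hsu : s (W.mkQ u) = s₀ (π₀ ⟨u, hu⟩) := by rw [← hs]; rfl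
  have hπ : W.mkQ (s (W.mkQ u) : E) = W.mkQ u := by
    rw [hsu]
    exact congrArg Subtype.val (LinearMap.congr_fun hs₀ (π₀ ⟨u, hu⟩))
  refine ⟨U.sub_mem hu (s _).2, (Submodule.Quotient.mk_eq_zero W).1 ?_⟩
  simpa [sub_eq_zero] using hπ.symm

theorem extPow_mono (p : ℕ) {U W : Submodule ℚ (V n)} (h : U ≤ W) :
    extPow p U ≤ extPow p W :=
  pow_le_pow_left' (Submodule.map_mono h) p

theorem map_extPow (p : ℕ) (q : V n →ₗ[ℚ] V n) (U : Submodule ℚ (V n)) :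
    (extPow p U).map (ExteriorAlgebra.map q).toLinearMap = extPow p (U.map q) := by
  rw [extPow, extPow, Submodule.map_pow, ← Submodule.map_comp, ExteriorAlgebra.map_comp_ι,
    Submodule.map_comp]

theorem map_eq_self_of_mem_extPow {p : ℕ} {q : V n →ₗ[ℚ] V n} {W : Submodule ℚ (V n)}
    (hq : ∀ w ∈ W, q w = w) {ω : ExteriorAlgebra ℚ (V n)} (hω : ω ∈ extPow p W) :
    ExteriorAlgebra.map q ω = ω := by
  induction hω using Submodule.pow_induction_on_left' with
  | algebraMap r => simp
  | add x y _ _ _ hx hy => simp [hx, hy]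
  | mem_mul m hm i x _ hx =>
    obtain ⟨w, hw, rfl⟩ := hm
    rw [map_mul, hx, ExteriorAlgebra.map_apply_ι, hq w hw]

theorem extPow_inf (p : ℕ) (U W : Submodule ℚ (V n)) :
    extPow p (U ⊓ W) = extPow p U ⊓ extPow p W := by
  refine le_antisymm (le_inf (extPow_mono p inf_le_left) (extPow_mono p inf_le_right)) ?_
  rintro ω ⟨hωU, hωW⟩
  obtain ⟨q, hqW, hqU⟩ := exists_linearMap_eqOn_map_le_inf U W
  rw [← map_eq_self_of_mem_extPow hqW hωW]
  exact extPow_mono p hqU (map_extPow p q U ▸ Submodule.mem_map_of_mem hωU)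

theorem extPow_finset_inf (p : ℕ) {t : Finset (Submodule ℚ (V n))} (ht : t.Nonempty) :
    extPow p (t.inf id) = ⨅ W ∈ t, extPow p W := by
  induction ht using Finset.Nonempty.cons_induction with
  | singleton W => simp
  | cons W t hWt ht ih =>
    rw [Finset.inf_cons, extPow_inf, ih, Finset.cons_eq_insert, Finset.iInf_insert, id_eq]

/-- By the descending chain condition, `sInf S` is the infimum of finitely many members of `S`. -/
theorem extPow_sInf (p : ℕ) {S : Set (Submodule ℚ (V n))} (hS : S.Nonempty) :
    extPow p (sInf S) = ⨅ W ∈ S, extPow p W := by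
  classical
  obtain ⟨W₀, hW₀⟩ := hS
  obtain ⟨t, htS, ht⟩ : ∃ t : Finset (Submodule ℚ (V n)),
      (t : Set (Submodule ℚ (V n))) ⊆ S ∧ sInf S = t.inf id :=
    CompleteLattice.WellFoundedGT.isSupFiniteCompact (Submodule ℚ (V n))ᵒᵈ S
  have hsInf : sInf S = (insert W₀ t).inf id := by
    refine le_antisymm (Finset.le_inf fun W hW => ?_) ?_
    · rcases Finset.mem_insert.1 hW with rfl | hW
      exacts [sInf_le hW₀, sInf_le (htS hW)]
    · exact (Finset.inf_mono (t.subset_insert W₀)).trans ht.ge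
  refine le_antisymm (le_iInf₂ fun W hW => extPow_mono p (sInf_le hW)) ?_
  rw [hsInf, extPow_finset_inf p (Finset.insert_nonempty _ _)]
  refine le_iInf₂ fun W hW => iInf₂_le W ?_
  rcases Finset.mem_insert.1 hW with rfl | hW
  exacts [hW₀, htS hW]

theorem extPow_biInf {ι : Type*} (p : ℕ) {s : Set ι} (hs : s.Nonempty)
    (F : ι → Submodule ℚ (V n)) :
    extPow p (⨅ i ∈ s, F i) = ⨅ i ∈ s, extPow p (F i) := by
  rw [← sInf_image, extPow_sInf p (hs.image F), iInf_image]

section Omega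

variable {σ θ : Set (V n)} {IB IC : Set (Set (V n))} {p : ℕ} {x : V n}

theorem IsFaceOf.subset (hθ : IsFaceOf θ σ) : θ ⊆ σ := by
  obtain ⟨f, -, rfl⟩ := hθ
  exact fun _ hx => hx.1

theorem omegaTheta_of_mem (hxσ : x ∈ σ) (hθ : IsFaceOf θ σ) (hxB : θ ∈ IB → x ∉ θ) :
    omegaTheta σ θ IB IC p x = extPow p (⨅ (_ : θ ∉ IC ∧ x ∈ θ), Submodule.span ℚ θ) := by
  have hhalf : x ∈ halfSpaceOf σ θ := ⟨x, hxσ, 0, zero_mem _, (add_zero x).symm⟩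
  by_cases hxθ : x ∈ θ
  · have hB : θ ∉ IB := fun h => hxB h hxθ
    by_cases hC : θ ∈ IC <;> simp [omegaTheta, hhalf, Submodule.subset_span hxθ, hB, hC, hxθ]
  · have hspan : x ∉ Submodule.span ℚ θ := fun h => hxθ (hθ.mem_of_mem_span hxσ h)
    simp [omegaTheta, hhalf, hspan, hxθ]

theorem bigOmega_of_mem (hxσ : x ∈ σ) (hxB : ∀ θ ∈ IB, x ∉ θ) :
    bigOmega σ IB IC p x =
      extPow p (⨅ θ ∈ facetsOf σ, ⨅ (_ : θ ∉ IC ∧ x ∈ θ), Submodule.span ℚ θ) := by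
  rw [bigOmega, if_neg fun h => h.elim (· hxσ) fun ⟨θ, hθ, hxθ⟩ => hxB θ hθ hxθ]
  simp only [Set.mem_ofPred_eq, Set.mem_sdiff, and_assoc, iInf_and]

theorem exists_omegaTheta_eq_bot (hσ : IsPolyCone σ) (hfull : Submodule.span ℚ σ = ⊤)
    (hIB : IB ⊆ facetsOf σ) (hx : x ∉ σ ∨ ∃ θ ∈ IB, x ∈ θ) :
    ∃ θ ∈ facetsOf σ, omegaTheta σ θ IB IC p x = ⊥ := by
  rcases hx with hxσ | ⟨θ, hθB, hxθ⟩
  · obtain ⟨θ, hθ, hx⟩ := exists_facet_notMem_halfSpaceOf hσ hfull hxσ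
    exact ⟨θ, hθ, if_pos hx⟩
  · have hhalf : x ∈ halfSpaceOf σ θ :=
      ⟨x, (hIB hθB).1.subset hxθ, 0, zero_mem _, (add_zero x).symm⟩
    exact ⟨θ, hIB hθB, by simp [omegaTheta, hhalf, Submodule.subset_span hxθ, hθB]⟩

end Omega

theorem danilov_forms_eq_intersection_of_halfspaces_general {n : ℕ}
    (σ : Set (V n)) (IB IC : Set (Set (V n))) (p : ℕ)
    (hσ : IsPolyCone σ)
    (hfull : Submodule.span ℚ σ = ⊤)
    (hfacets : 2 ≤ (facetsOf σ).ncard)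
    (hIB : IB ⊆ facetsOf σ)
    (m : Fin n → ℤ) :
    bigOmega σ IB IC p (fun i => (m i : ℚ)) =
      ⨅ θ ∈ facetsOf σ, omegaTheta σ θ IB IC p (fun i => (m i : ℚ)) := by
  set x : V n := fun i => (m i : ℚ)
  by_cases hbad : x ∉ σ ∨ ∃ θ ∈ IB, x ∈ θ
  · obtain ⟨θ, hθ, hω⟩ := exists_omegaTheta_eq_bot hσ hfull hIB hbad
    rw [bigOmega, if_pos hbad, eq_comm, eq_bot_iff]
    exact (iInf₂_le θ hθ).trans hω.le
  · obtain ⟨hxσ, hxB⟩ : x ∈ σ ∧ ∀ θ ∈ IB, x ∉ θ := by simpa using hbad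
    have hne : (facetsOf σ).Nonempty := Set.nonempty_of_ncard_ne_zero (by omega)
    rw [bigOmega_of_mem hxσ hxB, extPow_biInf p hne]
    exact iInf_congr fun θ => iInf_congr fun hθ => (omegaTheta_of_mem hxσ hθ.1 (hxB θ)).symm

/-- Danilov's graded module of logarithmic `p`-forms is the intersection of
its half-space counterparts, in each integral degree `m`. -/
theorem danilov_forms_eq_intersection_of_halfspaces {n : ℕ}
    (σ : Set (V n)) (IB IC : Set (Set (V n))) (p : ℕ)
    (hσ : IsPolyCone σ) (hsc : StronglyConvex σ)
    (hfull : Submodule.span ℚ σ = ⊤)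
    (hfacets : 2 ≤ (facetsOf σ).ncard)
    (hIB : IB ⊆ facetsOf σ) (hIC : IC ⊆ facetsOf σ) (hdisj : Disjoint IB IC)
    (m : Fin n → ℤ) :
    bigOmega σ IB IC p (fun i => (m i : ℚ)) =
      ⨅ θ ∈ facetsOf σ, omegaTheta σ θ IB IC p (fun i => (m i : ℚ)) :=
  danilov_forms_eq_intersection_of_halfspaces_general σ IB IC p hσ hfull hfacets hIB m

end ToricPaper
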